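/- Let r, h be nonzero real numbers. The real power series Σ_{i=0}^∞ c_i r^{i+1} (−h)^i t^{2i+1} in the variable t (which stands for 1/(2v)) has radius of convergence exactly 1/(2√(|r·h|)). -/
import Mathlib


lemma centralBinom_le_four_pow (n : ℕ) : Nat.centralBinom n ≤ 4 ^ n := by
  induction n with
  | zero => simp [Nat.centralBinom]
  | succ n ih =>
    have h1 := Nat.succ_mul_centralBinom_succ n
    have h2 : 2 * (2 * n + 1) * Nat.centralBinom n ≤ (n + 1) * 4 ^ (n + 1) := by
      calc 2 * (2 * n + 1) * Nat.centralBinom n ≤ 4 * (n + 1) * Nat.centralBinom n := by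
            apply Nat.mul_le_mul_right; omega
        _ ≤ 4 * (n + 1) * 4 ^ n := Nat.mul_le_mul_left _ ih
        _ = (n + 1) * 4 ^ (n + 1) := by ring
    have h3 : (n + 1) * Nat.centralBinom (n + 1) ≤ (n + 1) * 4 ^ (n + 1) := by
      rw [h1]; exact h2
    exact Nat.le_of_mul_le_mul_left h3 n.succ_pos

lemma catalan_le_four_pow (n : ℕ) : (catalan n : ℝ) ≤ 4 ^ n := by
  have h1 : catalan n ≤ Nat.centralBinom n := by
    rw [catalan_eq_centralBinom_div]; exact Nat.div_le_self _ _
  calc (catalan n : ℝ) ≤ (Nat.centralBinom n : ℝ) := by exact_mod_cast h1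
    _ ≤ (4 : ℝ) ^ n := by exact_mod_cast centralBinom_le_four_pow n

lemma four_pow_le_catalan (n : ℕ) : (4 : ℝ) ^ n ≤ ((2 * n + 2) * (n + 1)) * catalan n := by
  have key : 4 ^ n ≤ (2 * n + 2) * ((n + 1) * catalan n) := by
    rw [succ_mul_catalan_eq_centralBinom]
    rcases Nat.eq_zero_or_pos n with rfl | hn
    · simp [Nat.centralBinom]
    · calc 4 ^ n ≤ 2 * n * Nat.centralBinom n :=
            Nat.four_pow_le_two_mul_self_mul_centralBinom n hn
        _ ≤ (2 * n + 2) * Nat.centralBinom n := Nat.mul_le_mul_right _ (by omega)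
  have : (4 : ℝ) ^ n ≤ ((2 * n + 2) * ((n + 1) * catalan n) : ℕ) := by exact_mod_cast key
  push_cast at this ⊢
  linarith

lemma abs_term (r h t : ℝ) (i : ℕ) :
    |(catalan i : ℝ) * r ^ (i + 1) * (-h) ^ i * t ^ (2 * i + 1)| =
      (|r| * |t|) * ((catalan i : ℝ) * (|r| * |h| * t ^ 2) ^ i) := by
  have h1 : |t| ^ (2 * i + 1) = (t ^ 2) ^ i * |t| := by
    rw [pow_add, pow_one, pow_mul, sq_abs]
  rw [abs_mul, abs_mul, abs_mul, abs_pow, abs_pow, abs_pow, abs_neg, Nat.abs_cast, h1]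
  ring

/-- For nonzero reals `r, h`, the power series
`Σ_{i=0}^∞ c_i r^{i+1} (−h)^i t^{2i+1}` has radius of convergence exactly
`1/(2√|r·h|)`; that is, `1/(2√|r·h|)` is the least upper bound of the set of
`|t|` for which the series converges. -/
theorem catalan_series_radius_fibration (r h : ℝ) (hr : r ≠ 0) (hh : h ≠ 0) :
    IsLUB {x : ℝ | ∃ t : ℝ, |t| = x ∧
        Summable (fun i : ℕ =>
          (catalan i : ℝ) * r ^ (i + 1) * (-h) ^ i * t ^ (2 * i + 1))}
      (1 / (2 * Real.sqrt |r * h|)) := by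
  set K : ℝ := |r| * |h| with hK
  have hK0 : 0 < K := mul_pos (abs_pos.2 hr) (abs_pos.2 hh)
  have hrh : |r * h| = K := abs_mul r h
  set s : ℝ := Real.sqrt K with hs
  have hs0 : 0 < s := Real.sqrt_pos.2 hK0
  have hs2 : s ^ 2 = K := Real.sq_sqrt hK0.le
  rw [hrh]
  set L : ℝ := 1 / (2 * s) with hL
  have hL0 : 0 < L := by positivity
  constructor
  · -- upper bound
    rintro x ⟨t, rfl, hsum⟩
    by_contra hlt
    push_neg at hlt
    have ht0 : t ≠ 0 := by
      intro h0; rw [h0, abs_zero] at hlt; linarith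
    set Q : ℝ := 4 * K * t ^ 2 with hQ
    have ht2 : t ^ 2 = |t| ^ 2 := (sq_abs t).symm
    have hQ1 : 1 < Q := by
      have : L < |t| := hlt
      have h2 : L ^ 2 < |t| ^ 2 := by nlinarith [abs_nonneg t]
      have hL2 : L ^ 2 = 1 / (4 * K) := by
        rw [hL]; field_simp; nlinarith
      rw [hQ, ht2]
      rw [hL2] at h2
      rw [div_lt_iff₀ (by positivity)] at h2
      linarith
    have hQ0 : 0 < Q := by linarith
    have hq1 : Q⁻¹ < 1 := inv_lt_one_of_one_lt₀ hQ1
    have hq0 : 0 < Q⁻¹ := by positivity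
    -- f tends to 0
    have hf0 : Filter.Tendsto (fun i : ℕ =>
        |(catalan i : ℝ) * r ^ (i + 1) * (-h) ^ i * t ^ (2 * i + 1)|)
        Filter.atTop (nhds 0) := by
      have := hsum.tendsto_atTop_zero
      simpa using this.abs
    -- g tends to 0
    have hnorm : ‖Q⁻¹‖ < 1 := by rw [Real.norm_eq_abs, abs_of_pos hq0]; exact hq1
    have t2 : Filter.Tendsto (fun i : ℕ => (i : ℝ) ^ 2 * Q⁻¹ ^ i) Filter.atTop (nhds 0) :=
      (summable_pow_mul_geometric_of_norm_lt_one 2 hnorm).tendsto_atTop_zero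
    have t1 : Filter.Tendsto (fun i : ℕ => (i : ℝ) ^ 1 * Q⁻¹ ^ i) Filter.atTop (nhds 0) :=
      (summable_pow_mul_geometric_of_norm_lt_one 1 hnorm).tendsto_atTop_zero
    have t0 : Filter.Tendsto (fun i : ℕ => (i : ℝ) ^ 0 * Q⁻¹ ^ i) Filter.atTop (nhds 0) :=
      (summable_pow_mul_geometric_of_norm_lt_one 0 hnorm).tendsto_atTop_zero
    have hg : Filter.Tendsto (fun i : ℕ => (2 * (i : ℝ) + 2) * ((i : ℝ) + 1) * Q⁻¹ ^ i)
        Filter.atTop (nhds 0) := by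
      have comb : Filter.Tendsto (fun i : ℕ =>
          2 * ((i : ℝ) ^ 2 * Q⁻¹ ^ i) + 4 * ((i : ℝ) ^ 1 * Q⁻¹ ^ i) + 2 * ((i : ℝ) ^ 0 * Q⁻¹ ^ i))
          Filter.atTop (nhds 0) := by
        have := ((t2.const_mul 2).add (t1.const_mul 4)).add (t0.const_mul 2)
        simpa using this
      refine comb.congr (fun i => ?_)
      ring
    have hprod : Filter.Tendsto (fun i : ℕ =>
        |(catalan i : ℝ) * r ^ (i + 1) * (-h) ^ i * t ^ (2 * i + 1)| *
          ((2 * (i : ℝ) + 2) * ((i : ℝ) + 1) * Q⁻¹ ^ i)) Filter.atTop (nhds 0) := by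
      simpa using hf0.mul hg
    have hlow : ∀ i : ℕ, |r| * |t| ≤
        |(catalan i : ℝ) * r ^ (i + 1) * (-h) ^ i * t ^ (2 * i + 1)| *
          ((2 * (i : ℝ) + 2) * ((i : ℝ) + 1) * Q⁻¹ ^ i) := by
      intro i
      rw [abs_term]
      have key : (4 : ℝ) ^ i ≤ (2 * (i : ℝ) + 2) * ((i : ℝ) + 1) * catalan i := by
        have := four_pow_le_catalan i
        push_cast at this ⊢
        linarith
      have hpos4 : (0 : ℝ) < (1 / 4 : ℝ) ^ i := by positivity
      have hKt : (K * t ^ 2) ^ i * Q⁻¹ ^ i = (1 / 4 : ℝ) ^ i := by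
        rw [← mul_pow]
        congr 1
        rw [hQ]
        field_simp
      have h1 : (1 : ℝ) ≤ (catalan i : ℝ) * (K * t ^ 2) ^ i *
          ((2 * (i : ℝ) + 2) * ((i : ℝ) + 1) * Q⁻¹ ^ i) := by
        have e : (catalan i : ℝ) * (K * t ^ 2) ^ i *
            ((2 * (i : ℝ) + 2) * ((i : ℝ) + 1) * Q⁻¹ ^ i)
            = ((2 * (i : ℝ) + 2) * ((i : ℝ) + 1) * catalan i) * ((K * t ^ 2) ^ i * Q⁻¹ ^ i) := by
          ring
        rw [e, hKt]
        calc (1 : ℝ) = 4 ^ i * (1 / 4 : ℝ) ^ i := by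
              rw [← mul_pow]; norm_num
          _ ≤ (2 * (i : ℝ) + 2) * ((i : ℝ) + 1) * catalan i * (1 / 4 : ℝ) ^ i :=
              mul_le_mul_of_nonneg_right key hpos4.le
      have hrt : 0 < |r| * |t| := mul_pos (abs_pos.2 hr) (abs_pos.2 ht0)
      calc |r| * |t| = (|r| * |t|) * 1 := by ring
        _ ≤ (|r| * |t|) * ((catalan i : ℝ) * (K * t ^ 2) ^ i *
            ((2 * (i : ℝ) + 2) * ((i : ℝ) + 1) * Q⁻¹ ^ i)) :=
            mul_le_mul_of_nonneg_left h1 hrt.le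
        _ = (|r| * |t|) * ((catalan i : ℝ) * (K * t ^ 2) ^ i) *
            ((2 * (i : ℝ) + 2) * ((i : ℝ) + 1) * Q⁻¹ ^ i) := by ring
    have : |r| * |t| ≤ 0 := ge_of_tendsto' hprod hlow
    have hrt : 0 < |r| * |t| := mul_pos (abs_pos.2 hr) (abs_pos.2 ht0)
    linarith
  · -- least upper bound
    intro b hb
    by_contra hlt
    push_neg at hlt
    have h0S : (0 : ℝ) ∈ {x : ℝ | ∃ t : ℝ, |t| = x ∧
        Summable (fun i : ℕ =>
          (catalan i : ℝ) * r ^ (i + 1) * (-h) ^ i * t ^ (2 * i + 1))} := by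
      refine ⟨0, abs_zero, ?_⟩
      have : (fun i : ℕ => (catalan i : ℝ) * r ^ (i + 1) * (-h) ^ i * (0:ℝ) ^ (2 * i + 1))
          = fun _ => (0 : ℝ) := by
        funext i; simp
      rw [this]; exact summable_zero
    have hb0 : 0 ≤ b := hb h0S
    set t : ℝ := (b + L) / 2 with htdef
    have htb : b < t := by rw [htdef]; linarith
    have htL : t < L := by rw [htdef]; linarith
    have ht0 : 0 ≤ t := by linarith
    have hQ1 : 4 * K * t ^ 2 < 1 := by
      have hL2 : L ^ 2 = 1 / (4 * K) := by rw [hL]; field_simp; nlinarith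
      have h2 : t ^ 2 < L ^ 2 := by nlinarith
      rw [hL2] at h2
      rw [lt_div_iff₀ (by positivity)] at h2
      linarith
    have hQ0 : 0 ≤ 4 * K * t ^ 2 := by positivity
    have hKt0 : 0 ≤ K * t ^ 2 := mul_nonneg hK0.le (sq_nonneg t)
    have hgsum : Summable (fun i : ℕ => (|r| * |t|) * (4 * K * t ^ 2) ^ i) :=
      (summable_geometric_of_lt_one hQ0 hQ1).mul_left _
    have hle : ∀ i : ℕ,
        |(catalan i : ℝ) * r ^ (i + 1) * (-h) ^ i * t ^ (2 * i + 1)| ≤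
          (|r| * |t|) * (4 * K * t ^ 2) ^ i := by
      intro i
      rw [abs_term]
      refine mul_le_mul_of_nonneg_left ?_ (mul_nonneg (abs_nonneg r) (abs_nonneg t))
      calc (catalan i : ℝ) * (K * t ^ 2) ^ i ≤ 4 ^ i * (K * t ^ 2) ^ i :=
            mul_le_mul_of_nonneg_right (catalan_le_four_pow i) (pow_nonneg hKt0 i)
        _ = (4 * K * t ^ 2) ^ i := by rw [← mul_pow, ← mul_assoc]
    have hsum : Summable (fun i : ℕ =>
        (catalan i : ℝ) * r ^ (i + 1) * (-h) ^ i * t ^ (2 * i + 1)) :=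
      Summable.of_abs (Summable.of_nonneg_of_le (fun i => abs_nonneg _) hle hgsum)
    have : t ≤ b := hb ⟨t, abs_of_nonneg ht0, hsum⟩
    linarith
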